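/- For every fixed n ≥ 2 (and finite eighth moments), the exact identity Var[m_n] = q₀ β_n² + q₁ δ_n² − q₂ μ_n² holds, where q₀ = (n−2)/(p_n(n−1)), q₁ = 1/(p_n(n−1)), and q₂ = (p_n−1)/(p_n(n−1)). -/

import Mathlib

set_option linter.unusedSectionVars false
set_option maxHeartbeats 1000000


open MeasureTheory ProbabilityTheory Matrix Filter
open scoped Topology
open scoped ENNReal

noncomputable section

namespace LW

variable {Ω : Type*} [MeasurableSpace Ω]

/-- The Borel/product measurable structure on matrices. -/
instance {pn n : ℕ} : MeasurableSpace (Matrix (Fin pn) (Fin n) ℝ) :=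
  inferInstanceAs (MeasurableSpace (Fin pn → Fin n → ℝ))

/-- Normalized Frobenius inner product `⟨A,B⟩ₙ = tr(A Bᵀ)/p`. -/
def inp {pn : ℕ} (A B : Matrix (Fin pn) (Fin pn) ℝ) : ℝ :=
  (A * Bᵀ).trace / pn

/-- Normalized Frobenius norm `‖A‖ₙ = √(tr(A Aᵀ)/p)`. -/
def nrm {pn : ℕ} (A : Matrix (Fin pn) (Fin pn) ℝ) : ℝ :=
  Real.sqrt ((A * Aᵀ).trace / pn)

/-- Column-centered data matrix `x̃_{·k} = x_{·k} - (1/n) ∑_{k'} x_{·k'}`. -/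
def ctr {pn n : ℕ} (X : Matrix (Fin pn) (Fin n) ℝ) : Matrix (Fin pn) (Fin n) ℝ :=
  Matrix.of fun i k => X i k - (∑ k', X i k') / n

/-- Sample covariance `S = X̃ X̃ᵀ/(n-1)`. -/
def sampleCov {pn n : ℕ} (X : Matrix (Fin pn) (Fin n) ℝ) : Matrix (Fin pn) (Fin pn) ℝ :=
  ((n : ℝ) - 1)⁻¹ • (ctr X * (ctr X)ᵀ)

/-- Centered outer product `x̃_{·k} x̃_{·k}ᵀ`. -/
def outerC {pn n : ℕ} (X : Matrix (Fin pn) (Fin n) ℝ) (k : Fin n) :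
    Matrix (Fin pn) (Fin pn) ℝ :=
  Matrix.of fun i j => ctr X i k * ctr X j k

/-- Covariance of two real random variables. -/
def covP (P : Measure Ω) (f g : Ω → ℝ) : ℝ :=
  (∫ ω, f ω * g ω ∂P) - (∫ ω, f ω ∂P) * (∫ ω, g ω ∂P)

/-- Variance `Var[f] = E[(f - E f)²]`. -/
def varP (P : Measure Ω) (f : Ω → ℝ) : ℝ :=
  ∫ ω, (f ω - ∫ ω', f ω' ∂P) ^ 2 ∂P

/-- `μₙ = ⟨Σ, I⟩ₙ`. -/
def muS {pn : ℕ} (Sig : Matrix (Fin pn) (Fin pn) ℝ) : ℝ := inp Sig 1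

/-- `αₙ² = ‖Σ − μ I‖ₙ²`. -/
def alpha2 {pn : ℕ} (Sig : Matrix (Fin pn) (Fin pn) ℝ) : ℝ := nrm (Sig - muS Sig • 1) ^ 2

/-- `βₙ² = E[‖S − Σ‖ₙ²]`. -/
def beta2 (P : Measure Ω) {pn n : ℕ} (X : Ω → Matrix (Fin pn) (Fin n) ℝ)
    (Sig : Matrix (Fin pn) (Fin pn) ℝ) : ℝ :=
  ∫ ω, nrm (sampleCov (X ω) - Sig) ^ 2 ∂P

/-- `δₙ² = E[‖S − μ I‖ₙ²]`. -/
def delta2 (P : Measure Ω) {pn n : ℕ} (X : Ω → Matrix (Fin pn) (Fin n) ℝ)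
    (Sig : Matrix (Fin pn) (Fin pn) ℝ) : ℝ :=
  ∫ ω, nrm (sampleCov (X ω) - muS Sig • 1) ^ 2 ∂P

/-- `mₙ = ⟨S, I⟩ₙ`. -/
def mE {pn n : ℕ} (X : Ω → Matrix (Fin pn) (Fin n) ℝ) (ω : Ω) : ℝ :=
  inp (sampleCov (X ω)) 1

/-- `dₙ² = ‖S − mₙ I‖ₙ²`. -/
def d2E {pn n : ℕ} (X : Ω → Matrix (Fin pn) (Fin n) ℝ) (ω : Ω) : ℝ :=
  nrm (sampleCov (X ω) - mE X ω • 1) ^ 2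

/-- `b̄ₙ² = (1/n²) ∑ₖ ‖(n/(n−1)) x̃ₖ x̃ₖᵀ − S‖ₙ²`. -/
def bbar2E {pn n : ℕ} (X : Ω → Matrix (Fin pn) (Fin n) ℝ) (ω : Ω) : ℝ :=
  (1 / (n : ℝ) ^ 2) *
    ∑ k : Fin n, nrm (((n : ℝ) / ((n : ℝ) - 1)) • outerC (X ω) k - sampleCov (X ω)) ^ 2

def gammaC (n : ℕ) : ℝ := ((n : ℝ) * ((n : ℝ) - 1)) / ((n : ℝ) ^ 2 - 3 * (n : ℝ) + 3)
def lambdaC (n : ℕ) : ℝ :=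
  ((n : ℝ) ^ 2 * ((n : ℝ) - 2)) / (((n : ℝ) - 1) * ((n : ℝ) ^ 2 - 3 * (n : ℝ) + 3))
def c0 (n : ℕ) : ℝ := 1 / gammaC n - 1 / (n : ℝ) - lambdaC n / (gammaC n * (n : ℝ) ^ 2)
def c1 (n : ℕ) : ℝ := lambdaC n / (gammaC n * (n : ℝ) ^ 2)
def c2 (pn n : ℕ) : ℝ := ((pn : ℝ) + 1) * c1 n
def q0 (pn n : ℕ) : ℝ := ((n : ℝ) - 2) / ((pn : ℝ) * ((n : ℝ) - 1))
def q1 (pn n : ℕ) : ℝ := 1 / ((pn : ℝ) * ((n : ℝ) - 1))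
def q2 (pn n : ℕ) : ℝ := ((pn : ℝ) - 1) / ((pn : ℝ) * ((n : ℝ) - 1))
def c0f (pn n : ℕ) : ℝ := c0 n + (c1 n - c2 pn n) * q0 pn n / (1 - q1 pn n - q2 pn n)
def c1f (pn n : ℕ) : ℝ := c1 n + (c1 n - c2 pn n) * q1 pn n / (1 - q1 pn n - q2 pn n)
def c2f (pn n : ℕ) : ℝ := c2 pn n - (c1 n - c2 pn n) * q2 pn n / (1 - q1 pn n - q2 pn n)

/-- `bₙ² = (b̄ₙ² − c₁^f dₙ² − c₂^f mₙ²)/c₀^f`. -/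
def b2E {pn n : ℕ} (X : Ω → Matrix (Fin pn) (Fin n) ℝ) (ω : Ω) : ℝ :=
  (bbar2E X ω - c1f pn n * d2E X ω - c2f pn n * (mE X ω) ^ 2) / c0f pn n

/-- `b_{n,u}² = min(max(bₙ², 0), dₙ²)`. -/
def b2uE {pn n : ℕ} (X : Ω → Matrix (Fin pn) (Fin n) ℝ) (ω : Ω) : ℝ :=
  min (max (b2E X ω) 0) (d2E X ω)

/-- `a_{n,u}² = dₙ² − b_{n,u}²`. -/
def a2uE {pn n : ℕ} (X : Ω → Matrix (Fin pn) (Fin n) ℝ) (ω : Ω) : ℝ :=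
  d2E X ω - b2uE X ω

/-- Translation-invariant linear shrinkage estimator `Sₙ*`. -/
def SstarU {pn n : ℕ} (X : Ω → Matrix (Fin pn) (Fin n) ℝ) (ω : Ω) :
    Matrix (Fin pn) (Fin pn) ℝ :=
  (b2uE X ω / d2E X ω) • (mE X ω • (1 : Matrix (Fin pn) (Fin pn) ℝ)) +
    (a2uE X ω / d2E X ω) • sampleCov (X ω)

/-- Oracle `Σₙ* = (βₙ²/δₙ²) μₙ I + (αₙ²/δₙ²) Sₙ`. -/
def SigmaStar (P : Measure Ω) {pn n : ℕ} (X : Ω → Matrix (Fin pn) (Fin n) ℝ)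
    (Sig : Matrix (Fin pn) (Fin pn) ℝ) (ω : Ω) : Matrix (Fin pn) (Fin pn) ℝ :=
  (beta2 P X Sig / delta2 P X Sig) • (muS Sig • (1 : Matrix (Fin pn) (Fin pn) ℝ)) +
    (alpha2 Sig / delta2 P X Sig) • sampleCov (X ω)

/-- `Σₙ** = μₙ I + ((⟨S,Σ⟩ₙ − mₙ μₙ)/dₙ²)(S − mₙ I)`. -/
def SigmaStarStar {pn n : ℕ} (X : Ω → Matrix (Fin pn) (Fin n) ℝ)
    (Sig : Matrix (Fin pn) (Fin pn) ℝ) (ω : Ω) : Matrix (Fin pn) (Fin pn) ℝ :=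
  muS Sig • (1 : Matrix (Fin pn) (Fin pn) ℝ) +
    ((inp (sampleCov (X ω)) Sig - mE X ω * muS Sig) / d2E X ω) •
      (sampleCov (X ω) - mE X ω • 1)

/-- Ledoit–Wolf recommended `b̄_{n,r}² = (1/(n−1)²) ∑ₖ ‖x̃ₖ x̃ₖᵀ − S‖ₙ²`. -/
def bbar2rE {pn n : ℕ} (X : Ω → Matrix (Fin pn) (Fin n) ℝ) (ω : Ω) : ℝ :=
  (1 / ((n : ℝ) - 1) ^ 2) * ∑ k : Fin n, nrm (outerC (X ω) k - sampleCov (X ω)) ^ 2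

def b2rE {pn n : ℕ} (X : Ω → Matrix (Fin pn) (Fin n) ℝ) (ω : Ω) : ℝ :=
  min (max (bbar2rE X ω) 0) (d2E X ω)

def a2rE {pn n : ℕ} (X : Ω → Matrix (Fin pn) (Fin n) ℝ) (ω : Ω) : ℝ :=
  d2E X ω - b2rE X ω

def SstarR {pn n : ℕ} (X : Ω → Matrix (Fin pn) (Fin n) ℝ) (ω : Ω) :
    Matrix (Fin pn) (Fin pn) ℝ :=
  (b2rE X ω / d2E X ω) • (mE X ω • (1 : Matrix (Fin pn) (Fin pn) ℝ)) +
    (a2rE X ω / d2E X ω) • sampleCov (X ω)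

def b2mE {pn n : ℕ} (X : Ω → Matrix (Fin pn) (Fin n) ℝ) (ω : Ω) : ℝ :=
  min (max (bbar2E X ω) 0) (d2E X ω)

def a2mE {pn n : ℕ} (X : Ω → Matrix (Fin pn) (Fin n) ℝ) (ω : Ω) : ℝ :=
  d2E X ω - b2mE X ω

def SstarM {pn n : ℕ} (X : Ω → Matrix (Fin pn) (Fin n) ℝ) (ω : Ω) :
    Matrix (Fin pn) (Fin pn) ℝ :=
  (b2mE X ω / d2E X ω) • (mE X ω • (1 : Matrix (Fin pn) (Fin pn) ℝ)) +
    (a2mE X ω / d2E X ω) • sampleCov (X ω)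

def mSE {pn n : ℕ} (X : Ω → Matrix (Fin pn) (Fin n) ℝ) (ω : Ω) : ℝ :=
  (((n : ℝ) - 1) / n) * mE X ω

def a2sE {pn n : ℕ} (X : Ω → Matrix (Fin pn) (Fin n) ℝ) (ω : Ω) : ℝ :=
  (((n : ℝ) - 1) / n) * (d2E X ω - b2mE X ω)

def SstarS {pn n : ℕ} (X : Ω → Matrix (Fin pn) (Fin n) ℝ) (ω : Ω) :
    Matrix (Fin pn) (Fin pn) ℝ :=
  (((n : ℝ) - 1) / n) • SstarM X ω

/-- The quantity in Assumption 3: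
`(pₙ²/n) · (∑_{(i,j,k,l)∈Qₙ} Cov[y_{i1}y_{j1}, y_{k1}y_{l1}]²) / |Qₙ|`. -/
def A3quant (P : Measure Ω) (p : ℕ → ℕ) (Γ : ∀ n, Matrix (Fin (p n)) (Fin (p n)) ℝ)
    (X : ∀ n, Ω → Matrix (Fin (p n)) (Fin n) ℝ) (n : ℕ) : ℝ :=
  if hn : 0 < n then
    (let y : Fin (p n) → Ω → ℝ := fun i ω => ((Γ n)ᵀ * X n ω) i ⟨0, hn⟩
     let Q : Finset (Fin (p n) × Fin (p n) × Fin (p n) × Fin (p n)) :=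
       Finset.univ.filter fun q =>
         q.1 ≠ q.2.1 ∧ q.1 ≠ q.2.2.1 ∧ q.1 ≠ q.2.2.2 ∧
           q.2.1 ≠ q.2.2.1 ∧ q.2.1 ≠ q.2.2.2 ∧ q.2.2.1 ≠ q.2.2.2
     ((p n : ℝ) ^ 2 / n) *
       ((∑ q ∈ Q, (covP P (fun ω => y q.1 ω * y q.2.1 ω)
           (fun ω => y q.2.2.1 ω * y q.2.2.2 ω)) ^ 2) / Q.card))
  else 0

/-- `θₙ² = Var[(1/pₙ) ∑ᵢ y_{i1}²]`. -/
def theta2 (P : Measure Ω) (p : ℕ → ℕ) (Γ : ∀ n, Matrix (Fin (p n)) (Fin (p n)) ℝ)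
    (X : ∀ n, Ω → Matrix (Fin (p n)) (Fin n) ℝ) (n : ℕ) : ℝ :=
  if hn : 0 < n then
    varP P (fun ω => (∑ i, (((Γ n)ᵀ * X n ω) i ⟨0, hn⟩) ^ 2) / p n)
  else 0

lemma memLp_mul' {P : Measure Ω} {p q r : ℝ≥0∞} {f g : Ω → ℝ} (hf : MemLp f q P)
    (hg : MemLp g r P) (h : 1/p = 1/q + 1/r) : MemLp (fun ω => f ω * g ω) p P := by
  have : ENNReal.HolderTriple q r p := ⟨by simpa [one_div] using h.symm⟩
  exact MemLp.smul hg hf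

variable {P : Measure Ω} [IsProbabilityMeasure P] {n pn : ℕ}
  {X : Ω → Matrix (Fin pn) (Fin n) ℝ} {Sig : Matrix (Fin pn) (Fin pn) ℝ}

lemma Xmeas (hmeas : Measurable X) (i : Fin pn) (k : Fin n) :
    Measurable fun ω => X ω i k :=
  (measurable_pi_apply k).comp ((measurable_pi_apply i).comp hmeas)

lemma enn_half : (1:ℝ≥0∞)/1 = 1/2 + 1/2 := by
  apply (ENNReal.toReal_eq_toReal_iff' (by simp) (by simp)).mp
  rw [ENNReal.toReal_add (by simp) (by simp)]; norm_num

lemma enn_quarter : (1:ℝ≥0∞)/2 = 1/4 + 1/4 := by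
  apply (ENNReal.toReal_eq_toReal_iff' (by simp) (by simp)).mp
  rw [ENNReal.toReal_add (by simp) (by simp)]; norm_num

section Lp
variable (hL8 : ∀ (i : Fin pn) (k : Fin n), MemLp (fun ω => X ω i k) 8 P)
include hL8

lemma mem4 (i : Fin pn) (k : Fin n) : MemLp (fun ω => X ω i k) 4 P :=
  (hL8 i k).mono_exponent (by norm_num)

lemma mem2 (i : Fin pn) (k : Fin n) : MemLp (fun ω => X ω i k) 2 P :=
  (hL8 i k).mono_exponent (by norm_num)

lemma mem2pair (i j : Fin pn) (k l : Fin n) :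
    MemLp (fun ω => X ω i k * X ω j l) 2 P :=
  memLp_mul' (mem4 hL8 i k) (mem4 hL8 j l) enn_quarter

lemma int_single (i : Fin pn) (k : Fin n) : Integrable (fun ω => X ω i k) P :=
  ((hL8 i k).mono_exponent (by norm_num)).integrable le_rfl

lemma int_pair (i j : Fin pn) (k l : Fin n) :
    Integrable (fun ω => X ω i k * X ω j l) P :=
  memLp_one_iff_integrable.mp ((mem2pair hL8 i j k l).mono_exponent (by norm_num))

lemma int_triple (i1 i2 i3 : Fin pn) (k1 k2 k3 : Fin n) :
    Integrable (fun ω => X ω i1 k1 * X ω i2 k2 * X ω i3 k3) P :=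
  memLp_one_iff_integrable.mp
    (memLp_mul' (mem2pair hL8 i1 i2 k1 k2) (mem2 hL8 i3 k3) enn_half)

lemma int_quad (i1 i2 i3 i4 : Fin pn) (k1 k2 k3 k4 : Fin n) :
    Integrable (fun ω => (X ω i1 k1 * X ω i2 k2) * (X ω i3 k3 * X ω i4 k4)) P :=
  memLp_one_iff_integrable.mp
    (memLp_mul' (mem2pair hL8 i1 i2 k1 k2) (mem2pair hL8 i3 i4 k3 k4) enn_half)

end Lp

section Indep
variable (hmeas : Measurable X)
  (hL8 : ∀ (i : Fin pn) (k : Fin n), MemLp (fun ω => X ω i k) 8 P)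
  (hmean : ∀ (i : Fin pn) (k : Fin n), ∫ ω, X ω i k ∂P = 0)
  (hcov : ∀ (i j : Fin pn) (k : Fin n), ∫ ω, X ω i k * X ω j k ∂P = Sig i j)
  (hindep : iIndepFun
      (fun (k : Fin n) (ω : Ω) (i : Fin pn) => X ω i k) P)

lemma Ymeas (hmeas : Measurable X) (k : Fin n) :
    Measurable (fun ω (i : Fin pn) => X ω i k) :=
  measurable_pi_lambda _ (fun i => Xmeas hmeas i k)

include hmeas hindep in
/-- two-column factorization -/
lemma fact2 {k l : Fin n} (hkl : k ≠ l) {f g : (Fin pn → ℝ) → ℝ}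
    (hf : Measurable f) (hg : Measurable g)
    (h1 : Integrable (fun ω => f (fun i => X ω i k)) P)
    (h2 : Integrable (fun ω => g (fun i => X ω i l)) P) :
    ∫ ω, f (fun i => X ω i k) * g (fun i => X ω i l) ∂P
      = (∫ ω, f (fun i => X ω i k) ∂P) * ∫ ω, g (fun i => X ω i l) ∂P := by
  have hind : IndepFun (fun ω => f (fun i => X ω i k)) (fun ω => g (fun i => X ω i l)) P :=
    (hindep.indepFun hkl).comp hf hg
  exact hind.integral_fun_mul_eq_mul_integral h1.aestronglyMeasurable h2.aestronglyMeasurable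

include hmeas hindep in
/-- pair-of-columns vs single-column factorization -/
lemma fact3 {k l m : Fin n} (hkm : k ≠ m) (hlm : l ≠ m)
    {F : (Fin pn → ℝ) × (Fin pn → ℝ) → ℝ} {g : (Fin pn → ℝ) → ℝ}
    (hF : Measurable F) (hg : Measurable g)
    (h1 : Integrable (fun ω => F (fun i => X ω i k, fun i => X ω i l)) P)
    (h2 : Integrable (fun ω => g (fun i => X ω i m)) P) :
    ∫ ω, F (fun i => X ω i k, fun i => X ω i l) * g (fun i => X ω i m) ∂P
      = (∫ ω, F (fun i => X ω i k, fun i => X ω i l) ∂P) * ∫ ω, g (fun i => X ω i m) ∂P := by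
  have hind := (hindep.indepFun_prodMk (Ymeas hmeas) k l m hkm hlm).comp hF hg
  exact hind.integral_fun_mul_eq_mul_integral h1.aestronglyMeasurable h2.aestronglyMeasurable


include hmeas hL8 hcov hindep in
lemma mom2 {k l : Fin n} (hkl : k ≠ l) (i1 i2 j1 j2 : Fin pn) :
    ∫ ω, (X ω i1 k * X ω i2 k) * (X ω j1 l * X ω j2 l) ∂P = Sig i1 i2 * Sig j1 j2 := by
  have h := fact2 (P := P) hmeas hindep hkl
    (f := fun v => v i1 * v i2) (g := fun v => v j1 * v j2)
    ((measurable_pi_apply i1).mul (measurable_pi_apply i2))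
    ((measurable_pi_apply j1).mul (measurable_pi_apply j2))
    (int_pair hL8 i1 i2 k k) (int_pair hL8 j1 j2 l l)
  simpa [hcov] using h

include hmeas hL8 hmean hindep in
lemma mom_cross0 {k l : Fin n} (hkl : k ≠ l) (i j : Fin pn) :
    ∫ ω, X ω i k * X ω j l ∂P = 0 := by
  have h := fact2 (P := P) hmeas hindep hkl
    (f := fun v => v i) (g := fun v => v j)
    (measurable_pi_apply i) (measurable_pi_apply j)
    (int_single hL8 i k) (int_single hL8 j l)
  simpa [hmean] using h

include hmeas hL8 hmean hindep in
lemma mom_kill211 {k l m : Fin n} (hkm : k ≠ m) (hlm : l ≠ m) (i1 i2 i3 j : Fin pn) :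
    ∫ ω, ((X ω i1 k * X ω i2 k) * X ω i3 l) * X ω j m ∂P = 0 := by
  have h := fact3 (P := P) hmeas hindep hkm hlm
    (F := fun p => p.1 i1 * p.1 i2 * p.2 i3) (g := fun v => v j)
    ((((measurable_pi_apply i1).comp measurable_fst).mul
        ((measurable_pi_apply i2).comp measurable_fst)).mul
      ((measurable_pi_apply i3).comp measurable_snd))
    (measurable_pi_apply j)
    (int_triple hL8 i1 i2 i3 k k l) (int_single hL8 j m)
  simpa [hmean] using h

include hmeas hL8 hmean hindep in
lemma vanish {k l m : Fin n} (hlm : l ≠ m) (i1 i2 j1 j2 : Fin pn) :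
    ∫ ω, (X ω i1 k * X ω i2 k) * (X ω j1 l * X ω j2 m) ∂P = 0 := by
  rcases eq_or_ne k m with rfl | hkm
  · rw [show (fun ω => (X ω i1 k * X ω i2 k) * (X ω j1 l * X ω j2 k))
        = fun ω => ((X ω i1 k * X ω i2 k) * X ω j2 k) * X ω j1 l from
      funext fun ω => by ring]
    exact mom_kill211 hmeas hL8 hmean hindep (Ne.symm hlm) (Ne.symm hlm) i1 i2 j2 j1
  · rw [show (fun ω => (X ω i1 k * X ω i2 k) * (X ω j1 l * X ω j2 m))
        = fun ω => ((X ω i1 k * X ω i2 k) * X ω j1 l) * X ω j2 m from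
      funext fun ω => by ring]
    exact mom_kill211 hmeas hL8 hmean hindep hkm hlm i1 i2 j1 j2


include hmeas hL8 in
lemma intA2B2 (i1 i2 j1 j2 : Fin pn) :
    Integrable (fun ω => (∑ k, X ω i1 k * X ω i2 k) * (∑ l, X ω j1 l * X ω j2 l)) P := by
  have : (fun ω => (∑ k, X ω i1 k * X ω i2 k) * (∑ l, X ω j1 l * X ω j2 l))
      = fun ω => ∑ k, ∑ l, (X ω i1 k * X ω i2 k) * (X ω j1 l * X ω j2 l) :=
    funext fun ω => Finset.sum_mul_sum _ _ _ _
  rw [this]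
  exact integrable_finset_sum _ fun k _ => integrable_finset_sum _ fun l _ =>
    int_quad hL8 i1 i2 j1 j2 k k l l

lemma expand3 (u v w : Fin n → ℝ) :
    (∑ k, u k) * ((∑ l, v l) * (∑ m, w m)) = ∑ k, ∑ l, ∑ m, u k * (v l * w m) := by
  rw [Finset.sum_mul]
  refine Finset.sum_congr rfl fun k _ => ?_
  rw [Finset.sum_mul_sum, Finset.mul_sum]
  exact Finset.sum_congr rfl fun l _ => Finset.mul_sum _ _ _

include hmeas hL8 in
lemma intTriple3 (i1 i2 j1 j2 : Fin pn) :
    Integrable (fun ω => (∑ k, X ω i1 k * X ω i2 k) * ((∑ l, X ω j1 l) * (∑ m, X ω j2 m))) P := by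
  have : (fun ω => (∑ k, X ω i1 k * X ω i2 k) * ((∑ l, X ω j1 l) * (∑ m, X ω j2 m)))
      = fun ω => ∑ k, ∑ l, ∑ m, (X ω i1 k * X ω i2 k) * (X ω j1 l * X ω j2 m) :=
    funext fun ω => expand3 _ _ _
  rw [this]
  exact integrable_finset_sum _ fun k _ => integrable_finset_sum _ fun l _ =>
    integrable_finset_sum _ fun m _ => int_quad hL8 i1 i2 j1 j2 k k l m

lemma sum_split (f : Fin n → Fin n → ℝ) :
    ∑ k, ∑ l, f k l = (∑ k, f k k) + ∑ k, ∑ l ∈ Finset.univ.erase k, f k l := by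
  rw [← Finset.sum_add_distrib]
  exact Finset.sum_congr rfl fun k _ => (Finset.add_sum_erase _ _ (Finset.mem_univ k)).symm

include hmeas hL8 hcov hindep in
/-- `∫ (A2*B2 - T*T) = n(n-1)(Σii Σjj - Σij²)` -/
lemma EmainDiff (hn : 2 ≤ n) (i j : Fin pn) :
    ∫ ω, ((∑ k, X ω i k * X ω i k) * (∑ l, X ω j l * X ω j l)
        - (∑ k, X ω i k * X ω j k) * (∑ l, X ω i l * X ω j l)) ∂P
      = (n : ℝ) * ((n : ℝ) - 1) * (Sig i i * Sig j j - Sig i j * Sig i j) := by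
  have hfun : (fun ω => (∑ k, X ω i k * X ω i k) * (∑ l, X ω j l * X ω j l)
        - (∑ k, X ω i k * X ω j k) * (∑ l, X ω i l * X ω j l))
      = fun ω => ∑ k, ∑ l, ((X ω i k * X ω i k) * (X ω j l * X ω j l)
          - (X ω i k * X ω j k) * (X ω i l * X ω j l)) := by
    funext ω
    rw [Finset.sum_mul_sum, Finset.sum_mul_sum, ← Finset.sum_sub_distrib]
    exact Finset.sum_congr rfl fun k _ => (Finset.sum_sub_distrib _ _).symm
  have haux : ∀ k l : Fin n, Integrable (fun ω => (X ω i k * X ω i k) * (X ω j l * X ω j l)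
      - (X ω i k * X ω j k) * (X ω i l * X ω j l)) P :=
    fun k l => (int_quad hL8 i i j j k k l l).sub (int_quad hL8 i j i j k k l l)
  rw [hfun, integral_finset_sum _ fun k _ => integrable_finset_sum _ fun l _ => haux k l]
  have hswap : ∀ k : Fin n, ∫ ω, ∑ l, ((X ω i k * X ω i k) * (X ω j l * X ω j l)
          - (X ω i k * X ω j k) * (X ω i l * X ω j l)) ∂P
      = ∑ l, ∫ ω, ((X ω i k * X ω i k) * (X ω j l * X ω j l)
          - (X ω i k * X ω j k) * (X ω i l * X ω j l)) ∂P := fun k =>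
    integral_finset_sum _ fun l _ => haux k l
  simp_rw [hswap]
  rw [sum_split]
  have hdiag : ∀ k : Fin n, ∫ ω, ((X ω i k * X ω i k) * (X ω j k * X ω j k)
      - (X ω i k * X ω j k) * (X ω i k * X ω j k)) ∂P = 0 := by
    intro k
    have : (fun ω => ((X ω i k * X ω i k) * (X ω j k * X ω j k)
        - (X ω i k * X ω j k) * (X ω i k * X ω j k))) = fun _ => (0:ℝ) :=
      funext fun ω => by ring
    rw [this, integral_zero]
  have hoff : ∀ k : Fin n, ∀ l ∈ Finset.univ.erase k,
      ∫ ω, ((X ω i k * X ω i k) * (X ω j l * X ω j l)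
        - (X ω i k * X ω j k) * (X ω i l * X ω j l)) ∂P
      = Sig i i * Sig j j - Sig i j * Sig i j := by
    intro k l hl
    have hkl : k ≠ l := (Finset.ne_of_mem_erase hl).symm
    rw [integral_sub (int_quad hL8 i i j j k k l l) (int_quad hL8 i j i j k k l l),
      mom2 hmeas hL8 hcov hindep hkl i i j j, mom2 hmeas hL8 hcov hindep hkl i j i j]

  rw [Finset.sum_congr rfl fun k _ => hdiag k,
    Finset.sum_congr rfl fun k hk => Finset.sum_congr rfl (hoff k)]
  simp [Finset.sum_const, Finset.card_erase_of_mem, Finset.card_univ]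
  have h1n : ((n-1:ℕ):ℝ) = (n:ℝ)-1 := by
    rw [Nat.cast_sub (by omega : 1 ≤ n)]; simp
  rw [h1n]; ring


include hmeas hL8 hmean hindep in
lemma Etriple (p1 p2 q1 q2 : Fin pn) :
    ∫ ω, (∑ k, X ω p1 k * X ω p2 k) * ((∑ l, X ω q1 l) * (∑ m, X ω q2 m)) ∂P
      = ∫ ω, (∑ k, X ω p1 k * X ω p2 k) * (∑ l, X ω q1 l * X ω q2 l) ∂P := by
  have hL : (fun ω => (∑ k, X ω p1 k * X ω p2 k) * ((∑ l, X ω q1 l) * (∑ m, X ω q2 m)))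
      = fun ω => ∑ k, ∑ l, ∑ m, (X ω p1 k * X ω p2 k) * (X ω q1 l * X ω q2 m) :=
    funext fun ω => expand3 _ _ _
  have hR : (fun ω => (∑ k, X ω p1 k * X ω p2 k) * (∑ l, X ω q1 l * X ω q2 l))
      = fun ω => ∑ k, ∑ l, (X ω p1 k * X ω p2 k) * (X ω q1 l * X ω q2 l) :=
    funext fun ω => Finset.sum_mul_sum _ _ _ _
  rw [hL, hR,
    integral_finset_sum _ fun k _ => integrable_finset_sum _ fun l _ =>
      integrable_finset_sum _ fun m _ => int_quad hL8 p1 p2 q1 q2 k k l m,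
    integral_finset_sum _ fun k _ => integrable_finset_sum _ fun l _ =>
      int_quad hL8 p1 p2 q1 q2 k k l l]
  refine Finset.sum_congr rfl fun k _ => ?_
  rw [integral_finset_sum _ fun l _ => integrable_finset_sum _ fun m _ =>
      int_quad hL8 p1 p2 q1 q2 k k l m,
    integral_finset_sum _ fun l _ => int_quad hL8 p1 p2 q1 q2 k k l l]
  refine Finset.sum_congr rfl fun l _ => ?_
  rw [integral_finset_sum _ fun m _ => int_quad hL8 p1 p2 q1 q2 k k l m]
  refine Finset.sum_eq_single l (fun m _ hml =>
    vanish hmeas hL8 hmean hindep (Ne.symm hml) p1 p2 q1 q2) (by simp)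


lemma ctr_inner (hn : 2 ≤ n) (M : Matrix (Fin pn) (Fin n) ℝ) (i j : Fin pn) :
    ∑ k, ctr M i k * ctr M j k
      = (∑ k, M i k * M j k) - (∑ k, M i k) * (∑ k, M j k) / n := by
  have hn0 : (n:ℝ) ≠ 0 := Nat.cast_ne_zero.mpr (by omega)
  have hterm : ∀ k : Fin n, ctr M i k * ctr M j k
      = M i k * M j k - M i k * ((∑ k', M j k') / n)
        - ((∑ k', M i k') / n) * M j k + ((∑ k', M i k') / n) * ((∑ k', M j k') / n) := by
    intro k; simp only [ctr, Matrix.of_apply]; ring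
  rw [Finset.sum_congr rfl fun k _ => hterm k]
  simp only [Finset.sum_add_distrib, Finset.sum_sub_distrib, ← Finset.sum_mul,
    ← Finset.mul_sum, Finset.sum_const, Finset.card_univ, Fintype.card_fin, nsmul_eq_mul]
  field_simp
  ring

include hmeas hL8 hmean hcov hindep in
lemma K8ij (hn : 2 ≤ n) (i j : Fin pn) :
    ∫ ω, ((∑ k, ctr (X ω) i k * ctr (X ω) i k) * (∑ k, ctr (X ω) j k * ctr (X ω) j k)
        - (∑ k, ctr (X ω) i k * ctr (X ω) j k) * (∑ k, ctr (X ω) i k * ctr (X ω) j k)) ∂P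
      = ((n:ℝ) - 1) * ((n:ℝ) - 2) * (Sig i i * Sig j j - Sig i j * Sig i j) := by
  have hn0 : (n:ℝ) ≠ 0 := Nat.cast_ne_zero.mpr (by omega)
  have hfun : (fun ω => ((∑ k, ctr (X ω) i k * ctr (X ω) i k)
          * (∑ k, ctr (X ω) j k * ctr (X ω) j k)
        - (∑ k, ctr (X ω) i k * ctr (X ω) j k) * (∑ k, ctr (X ω) i k * ctr (X ω) j k)))
      = fun ω =>
        (1 - 2/(n:ℝ)) * ((∑ k, X ω i k * X ω i k) * (∑ l, X ω j l * X ω j l)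
            - (∑ k, X ω i k * X ω j k) * (∑ l, X ω i l * X ω j l))
        - (1/(n:ℝ)) * ((∑ k, X ω i k * X ω i k) * ((∑ l, X ω j l) * (∑ m, X ω j m))
            - (∑ k, X ω i k * X ω i k) * (∑ l, X ω j l * X ω j l))
        - (1/(n:ℝ)) * ((∑ k, X ω j k * X ω j k) * ((∑ l, X ω i l) * (∑ m, X ω i m))
            - (∑ k, X ω j k * X ω j k) * (∑ l, X ω i l * X ω i l))
        + (2/(n:ℝ)) * ((∑ k, X ω i k * X ω j k) * ((∑ l, X ω i l) * (∑ m, X ω j m))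
            - (∑ k, X ω i k * X ω j k) * (∑ l, X ω i l * X ω j l)) := by
    funext ω
    rw [ctr_inner hn (X ω) i i, ctr_inner hn (X ω) j j, ctr_inner hn (X ω) i j]
    field_simp
    ring
  have i1 : Integrable (fun ω => (∑ k, X ω i k * X ω i k) * (∑ l, X ω j l * X ω j l)) P :=
    intA2B2 hmeas hL8 i i j j
  have i2 : Integrable (fun ω => (∑ k, X ω i k * X ω j k) * (∑ l, X ω i l * X ω j l)) P :=
    intA2B2 hmeas hL8 i j i j
  have i1' : Integrable (fun ω => (∑ k, X ω j k * X ω j k) * (∑ l, X ω i l * X ω i l)) P :=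
    intA2B2 hmeas hL8 j j i i
  have i3 : Integrable (fun ω => (∑ k, X ω i k * X ω i k)
      * ((∑ l, X ω j l) * (∑ m, X ω j m))) P := intTriple3 hmeas hL8 i i j j
  have i4 : Integrable (fun ω => (∑ k, X ω j k * X ω j k)
      * ((∑ l, X ω i l) * (∑ m, X ω i m))) P := intTriple3 hmeas hL8 j j i i
  have i5 : Integrable (fun ω => (∑ k, X ω i k * X ω j k)
      * ((∑ l, X ω i l) * (∑ m, X ω j m))) P := intTriple3 hmeas hL8 i j i j
  have e1 := EmainDiff hmeas hL8 hcov hindep hn i j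
  have e2 : ∫ ω, ((∑ k, X ω i k * X ω i k) * ((∑ l, X ω j l) * (∑ m, X ω j m))
      - (∑ k, X ω i k * X ω i k) * (∑ l, X ω j l * X ω j l)) ∂P = 0 := by
    rw [integral_sub i3 i1, Etriple hmeas hL8 hmean hindep i i j j, sub_self]
  have e3 : ∫ ω, ((∑ k, X ω j k * X ω j k) * ((∑ l, X ω i l) * (∑ m, X ω i m))
      - (∑ k, X ω j k * X ω j k) * (∑ l, X ω i l * X ω i l)) ∂P = 0 := by
    rw [integral_sub i4 i1', Etriple hmeas hL8 hmean hindep j j i i, sub_self]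
  have e4 : ∫ ω, ((∑ k, X ω i k * X ω j k) * ((∑ l, X ω i l) * (∑ m, X ω j m))
      - (∑ k, X ω i k * X ω j k) * (∑ l, X ω i l * X ω j l)) ∂P = 0 := by
    rw [integral_sub i5 i2, Etriple hmeas hL8 hmean hindep i j i j, sub_self]
  have G1 : Integrable (fun ω => (1 - 2/(n:ℝ)) * ((∑ k, X ω i k * X ω i k) * (∑ l, X ω j l * X ω j l)
      - (∑ k, X ω i k * X ω j k) * (∑ l, X ω i l * X ω j l))) P := (i1.sub i2).const_mul _
  have G2 : Integrable (fun ω => (1/(n:ℝ)) * ((∑ k, X ω i k * X ω i k) * ((∑ l, X ω j l) * (∑ m, X ω j m))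
      - (∑ k, X ω i k * X ω i k) * (∑ l, X ω j l * X ω j l))) P := (i3.sub i1).const_mul _
  have G3 : Integrable (fun ω => (1/(n:ℝ)) * ((∑ k, X ω j k * X ω j k) * ((∑ l, X ω i l) * (∑ m, X ω i m))
      - (∑ k, X ω j k * X ω j k) * (∑ l, X ω i l * X ω i l))) P := (i4.sub i1').const_mul _
  have G4 : Integrable (fun ω => (2/(n:ℝ)) * ((∑ k, X ω i k * X ω j k) * ((∑ l, X ω i l) * (∑ m, X ω j m))
      - (∑ k, X ω i k * X ω j k) * (∑ l, X ω i l * X ω j l))) P := (i5.sub i2).const_mul _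
  have G12 : Integrable (fun ω => (1 - 2/(n:ℝ)) * ((∑ k, X ω i k * X ω i k) * (∑ l, X ω j l * X ω j l)
      - (∑ k, X ω i k * X ω j k) * (∑ l, X ω i l * X ω j l))
      - (1/(n:ℝ)) * ((∑ k, X ω i k * X ω i k) * ((∑ l, X ω j l) * (∑ m, X ω j m))
      - (∑ k, X ω i k * X ω i k) * (∑ l, X ω j l * X ω j l))) P := G1.sub G2
  have G123 : Integrable (fun ω => (1 - 2/(n:ℝ)) * ((∑ k, X ω i k * X ω i k) * (∑ l, X ω j l * X ω j l)
      - (∑ k, X ω i k * X ω j k) * (∑ l, X ω i l * X ω j l))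
      - (1/(n:ℝ)) * ((∑ k, X ω i k * X ω i k) * ((∑ l, X ω j l) * (∑ m, X ω j m))
      - (∑ k, X ω i k * X ω i k) * (∑ l, X ω j l * X ω j l))
      - (1/(n:ℝ)) * ((∑ k, X ω j k * X ω j k) * ((∑ l, X ω i l) * (∑ m, X ω i m))
      - (∑ k, X ω j k * X ω j k) * (∑ l, X ω i l * X ω i l))) P := G12.sub G3
  rw [hfun, integral_add G123 G4, integral_sub G12 G3, integral_sub G1 G2,
    integral_const_mul, integral_const_mul, integral_const_mul, integral_const_mul,
    integral_sub i1 i2, integral_sub i3 i1, integral_sub i4 i1', integral_sub i5 i2]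
  have e1' : ∫ ω, (∑ k, X ω i k * X ω i k) * (∑ l, X ω j l * X ω j l) ∂P - ∫ ω, (∑ k, X ω i k * X ω j k) * (∑ l, X ω i l * X ω j l) ∂P
      = (n : ℝ) * ((n : ℝ) - 1) * (Sig i i * Sig j j - Sig i j * Sig i j) := by
    rw [← integral_sub i1 i2]; exact e1
  have e2' : ∫ ω, (∑ k, X ω i k * X ω i k) * ((∑ l, X ω j l) * (∑ m, X ω j m)) ∂P = ∫ ω, (∑ k, X ω i k * X ω i k) * (∑ l, X ω j l * X ω j l) ∂P :=
    Etriple hmeas hL8 hmean hindep i i j j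
  have e3' : ∫ ω, (∑ k, X ω j k * X ω j k) * ((∑ l, X ω i l) * (∑ m, X ω i m)) ∂P = ∫ ω, (∑ k, X ω j k * X ω j k) * (∑ l, X ω i l * X ω i l) ∂P :=
    Etriple hmeas hL8 hmean hindep j j i i
  have e4' : ∫ ω, (∑ k, X ω i k * X ω j k) * ((∑ l, X ω i l) * (∑ m, X ω j m)) ∂P = ∫ ω, (∑ k, X ω i k * X ω j k) * (∑ l, X ω i l * X ω j l) ∂P :=
    Etriple hmeas hL8 hmean hindep i j i j
  rw [e2', e3', e4', e1']
  field_simp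
  ring


include hmeas hL8 hmean hcov hindep in
/-- unbiasedness: `∫ C i j = (n-1) Σ i j` -/
lemma ECij (hn : 2 ≤ n) (i j : Fin pn) :
    ∫ ω, ∑ k, ctr (X ω) i k * ctr (X ω) j k ∂P = ((n:ℝ) - 1) * Sig i j := by
  have hn0 : (n:ℝ) ≠ 0 := Nat.cast_ne_zero.mpr (by omega)
  have hfun : (fun ω => ∑ k, ctr (X ω) i k * ctr (X ω) j k)
      = fun ω => (∑ k, X ω i k * X ω j k) - (1/(n:ℝ)) * ∑ k, ∑ l, X ω i k * X ω j l := by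
    funext ω
    rw [ctr_inner hn (X ω) i j, Finset.sum_mul_sum]
    ring
  have hT : Integrable (fun ω => ∑ k, X ω i k * X ω j k) P :=
    integrable_finset_sum _ fun k _ => int_pair hL8 i j k k
  have hC : Integrable (fun ω => ∑ k, ∑ l, X ω i k * X ω j l) P :=
    integrable_finset_sum _ fun k _ => integrable_finset_sum _ fun l _ => int_pair hL8 i j k l
  rw [hfun, integral_sub hT (hC.const_mul _), integral_const_mul,
    integral_finset_sum _ fun k _ => int_pair hL8 i j k k,
    integral_finset_sum _ fun k _ => integrable_finset_sum _ fun l _ => int_pair hL8 i j k l]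
  have hswap : ∀ k : Fin n, ∫ ω, ∑ l, X ω i k * X ω j l ∂P
      = ∑ l, ∫ ω, X ω i k * X ω j l ∂P := fun k =>
    integral_finset_sum _ fun l _ => int_pair hL8 i j k l
  simp_rw [hswap]
  have hval : ∀ k l : Fin n, ∫ ω, X ω i k * X ω j l ∂P = if k = l then Sig i j else 0 := by
    intro k l
    by_cases h : k = l
    · subst h; simp [hcov i j k]
    · simp [h, mom_cross0 hmeas hL8 hmean hindep h i j]
  simp_rw [hval]
  simp [Finset.sum_ite_eq, Finset.card_univ]
  field_simp

include hmeas hL8 in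
lemma memC2 (hn : 2 ≤ n) (i j : Fin pn) :
    MemLp (fun ω => ∑ k, ctr (X ω) i k * ctr (X ω) j k) 2 P := by
  have hfun : (fun ω => ∑ k, ctr (X ω) i k * ctr (X ω) j k)
      = fun ω => (∑ k, X ω i k * X ω j k) - (1/(n:ℝ)) * ∑ k, ∑ l, X ω i k * X ω j l := by
    funext ω
    rw [ctr_inner hn (X ω) i j, Finset.sum_mul_sum]
    ring
  rw [hfun]
  have h1 : MemLp (fun ω => ∑ k, X ω i k * X ω j k) 2 P := by
    rw [show (fun ω => ∑ k, X ω i k * X ω j k)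
        = ∑ k, (fun ω => X ω i k * X ω j k) from (by rw [Finset.sum_fn])]
    exact memLp_finset_sum' _ fun k _ => mem2pair hL8 i j k k
  have h2 : MemLp (fun ω => ∑ k, ∑ l, X ω i k * X ω j l) 2 P := by
    rw [show (fun ω => ∑ k, ∑ l, X ω i k * X ω j l)
        = ∑ k, ∑ l, (fun ω => X ω i k * X ω j l) from (by
          rw [Finset.sum_fn]
          exact funext fun ω => Finset.sum_congr rfl fun k _ => by rw [Finset.sum_fn])]
    exact memLp_finset_sum' _ fun k _ => memLp_finset_sum' _ fun l _ => mem2pair hL8 i j k l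
  exact h1.sub (h2.const_mul _)

lemma sq_int {f : Ω → ℝ} {P : Measure Ω} [IsProbabilityMeasure P] (hf : MemLp f 2 P) :
    Integrable (fun ω => f ω * f ω) P :=
  memLp_one_iff_integrable.mp (memLp_mul' hf hf enn_half)

lemma mul_int {f g : Ω → ℝ} {P : Measure Ω} [IsProbabilityMeasure P]
    (hf : MemLp f 2 P) (hg : MemLp g 2 P) :
    Integrable (fun ω => f ω * g ω) P :=
  memLp_one_iff_integrable.mp (memLp_mul' hf hg enn_half)

lemma varP_eq {f : Ω → ℝ} {P : Measure Ω} [IsProbabilityMeasure P] (hf : MemLp f 2 P) :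
    varP P f = (∫ ω, f ω * f ω ∂P) - (∫ ω, f ω ∂P) ^ 2 := by
  have hfi : Integrable f P := hf.integrable one_le_two
  have hf2 : Integrable (fun ω => f ω * f ω) P := sq_int hf
  unfold varP
  have hexp : (fun ω => (f ω - ∫ ω', f ω' ∂P) ^ 2)
      = fun ω => f ω * f ω - (2 * ∫ ω', f ω' ∂P) * f ω + (∫ ω', f ω' ∂P) ^ 2 :=
    funext fun ω => by ring
  have hI1 : Integrable (fun ω => f ω * f ω - (2 * ∫ ω', f ω' ∂P) * f ω) P :=
    hf2.sub (hfi.const_mul _)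
  rw [hexp, integral_add hI1 (integrable_const _),
    integral_sub hf2 (hfi.const_mul _), integral_const_mul, integral_const]
  simp [measure_univ]
  ring

lemma Esq_affine {g : Ω → ℝ} {P : Measure Ω} [IsProbabilityMeasure P]
    (hg2 : MemLp g 2 P) (a s : ℝ) :
    ∫ ω, (a * g ω - s) * (a * g ω - s) ∂P
      = a ^ 2 * (∫ ω, g ω * g ω ∂P) - 2 * s * a * (∫ ω, g ω ∂P) + s ^ 2 := by
  have hgi : Integrable g P := hg2.integrable one_le_two
  have hgg : Integrable (fun ω => g ω * g ω) P := sq_int hg2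
  have hexp : (fun ω => (a * g ω - s) * (a * g ω - s))
      = fun ω => a ^ 2 * (g ω * g ω) - (2 * s * a) * g ω + s ^ 2 :=
    funext fun ω => by ring
  have hI1 : Integrable (fun ω => a ^ 2 * (g ω * g ω) - (2 * s * a) * g ω) P :=
    (hgg.const_mul _).sub (hgi.const_mul _)
  rw [hexp, integral_add hI1 (integrable_const _),
    integral_sub (hgg.const_mul _) (hgi.const_mul _), integral_const_mul, integral_const_mul,
    integral_const]
  simp [measure_univ]

end Indep

lemma inp_one {pn : ℕ} (A : Matrix (Fin pn) (Fin pn) ℝ) :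
    inp A 1 = (∑ i, A i i) / pn := by
  simp [inp, Matrix.trace, Matrix.diag]

lemma nrm_sq {pn : ℕ} (A : Matrix (Fin pn) (Fin pn) ℝ) :
    nrm A ^ 2 = (∑ i, ∑ j, A i j * A i j) / pn := by
  have h : ((A * Aᵀ).trace) = ∑ i, ∑ j, A i j * A i j := by
    simp [Matrix.trace, Matrix.diag, Matrix.mul_apply]
  rw [nrm, h]
  exact Real.sq_sqrt (div_nonneg
    (Finset.sum_nonneg fun i _ => Finset.sum_nonneg fun j _ => mul_self_nonneg _)
    (Nat.cast_nonneg _))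

lemma memLp2_sum {P : Measure Ω} {ι : Type*} (s : Finset ι) (f : ι → Ω → ℝ)
    (hf : ∀ i ∈ s, MemLp (f i) 2 P) : MemLp (fun ω => ∑ i ∈ s, f i ω) 2 P := by
  rw [show (fun ω => ∑ i ∈ s, f i ω) = ∑ i ∈ s, f i from (Finset.sum_fn s f).symm]
  exact memLp_finset_sum' s hf


theorem stmt_9
    {Ω : Type*} [MeasurableSpace Ω] (P : Measure Ω) [IsProbabilityMeasure P]
    (n pn : ℕ) (hn : 2 ≤ n) (hpn : 1 ≤ pn)
    (X : Ω → Matrix (Fin pn) (Fin n) ℝ)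
    (Sig : Matrix (Fin pn) (Fin pn) ℝ)
    (hmeas : Measurable X)
    (hL8 : ∀ (i : Fin pn) (k : Fin n), MemLp (fun ω => X ω i k) 8 P)
    (hmean : ∀ (i : Fin pn) (k : Fin n), ∫ ω, X ω i k ∂P = 0)
    (hcov : ∀ (i j : Fin pn) (k : Fin n), ∫ ω, X ω i k * X ω j k ∂P = Sig i j)
    (hindep : iIndepFun
      (fun (k : Fin n) (ω : Ω) (i : Fin pn) => X ω i k) P)
    (hident : ∀ k k' : Fin n,
      IdentDistrib (fun ω (i : Fin pn) => X ω i k)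
        (fun ω (i : Fin pn) => X ω i k') P P)
    :
    varP P (mE X)
      = q0 pn n * beta2 P X Sig + q1 pn n * delta2 P X Sig - q2 pn n * muS Sig ^ 2 := by
  classical
  have hn0 : (n:ℝ) ≠ 0 := Nat.cast_ne_zero.mpr (by omega)
  have hn2 : (2:ℝ) ≤ (n:ℝ) := by exact_mod_cast hn
  have hn1 : (n:ℝ) - 1 ≠ 0 := by linarith
  have hp0 : (pn:ℝ) ≠ 0 := Nat.cast_ne_zero.mpr (by omega)
  set c : ℝ := ((n:ℝ) - 1)⁻¹ with hc
  have hcn : c * ((n:ℝ) - 1) = 1 := inv_mul_cancel₀ hn1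
  set tr : ℝ := ∑ i, Sig i i with htr
  set W : ℝ := ∑ i : Fin pn, ∑ j : Fin pn, Sig i j * Sig i j with hW
  set E3 : ℝ := ∑ i : Fin pn, ∑ j : Fin pn,
    ∫ ω, (∑ k, ctr (X ω) i k * ctr (X ω) j k) * (∑ k, ctr (X ω) i k * ctr (X ω) j k) ∂P with hE3
  set ED : ℝ := ∑ i : Fin pn, ∑ j : Fin pn,
    ∫ ω, (∑ k, ctr (X ω) i k * ctr (X ω) i k) * (∑ k, ctr (X ω) j k * ctr (X ω) j k) ∂P with hED
  have hS : ∀ (ω : Ω) (i j : Fin pn), sampleCov (X ω) i j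
      = c * ∑ k, ctr (X ω) i k * ctr (X ω) j k := by
    intro ω i j
    simp [sampleCov, Matrix.smul_apply, smul_eq_mul, Matrix.mul_apply,
      Matrix.transpose_apply, hc]
  have hmu : muS Sig = tr / pn := by
    simp only [muS, inp_one, htr]
  -- global key identity
  have hperij : ∀ i j : Fin pn,
      (∫ ω, (∑ k, ctr (X ω) i k * ctr (X ω) i k) * (∑ k, ctr (X ω) j k * ctr (X ω) j k) ∂P)
      - (∫ ω, (∑ k, ctr (X ω) i k * ctr (X ω) j k) * (∑ k, ctr (X ω) i k * ctr (X ω) j k) ∂P)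
      = ((n:ℝ) - 1) * ((n:ℝ) - 2) * (Sig i i * Sig j j - Sig i j * Sig i j) := by
    intro i j
    rw [← integral_sub (mul_int (memC2 hmeas hL8 hn i i) (memC2 hmeas hL8 hn j j))
      (mul_int (memC2 hmeas hL8 hn i j) (memC2 hmeas hL8 hn i j))]
    exact K8ij hmeas hL8 hmean hcov hindep hn i j
  have hK8 : ED - E3 = ((n:ℝ) - 1) * ((n:ℝ) - 2) * (tr * tr - W) := by
    have h1 : ED - E3 = ∑ i : Fin pn, ∑ j : Fin pn,
        (((n:ℝ) - 1) * ((n:ℝ) - 2) * (Sig i i * Sig j j - Sig i j * Sig i j)) := by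
      rw [hED, hE3, ← Finset.sum_sub_distrib]
      refine Finset.sum_congr rfl fun i _ => ?_
      rw [← Finset.sum_sub_distrib]
      exact Finset.sum_congr rfl fun j _ => hperij i j
    rw [h1]
    have h2 : ∑ i : Fin pn, ∑ j : Fin pn,
        (((n:ℝ) - 1) * ((n:ℝ) - 2) * (Sig i i * Sig j j - Sig i j * Sig i j))
        = ((n:ℝ) - 1) * ((n:ℝ) - 2)
          * ∑ i : Fin pn, ∑ j : Fin pn, (Sig i i * Sig j j - Sig i j * Sig i j) := by
      rw [Finset.mul_sum]
      exact Finset.sum_congr rfl fun i _ => by rw [Finset.mul_sum]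
    rw [h2]
    congr 1
    rw [show ∑ i : Fin pn, ∑ j : Fin pn, (Sig i i * Sig j j - Sig i j * Sig i j)
        = (∑ i : Fin pn, ∑ j : Fin pn, Sig i i * Sig j j)
          - ∑ i : Fin pn, ∑ j : Fin pn, Sig i j * Sig i j from by
      rw [← Finset.sum_sub_distrib]
      exact Finset.sum_congr rfl fun i _ => by rw [← Finset.sum_sub_distrib]]
    rw [← Finset.sum_mul_sum, ← htr, ← hW]
  -- mE basic facts
  have hmE : mE X = fun ω =>
      (1/(pn:ℝ)) * ∑ i, c * ∑ k, ctr (X ω) i k * ctr (X ω) i k := by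
    funext ω
    simp only [mE, inp_one]
    rw [Finset.sum_congr rfl fun i _ => hS ω i i]
    ring
  have hmE2 : MemLp (mE X) 2 P := by
    rw [hmE]
    exact (memLp2_sum Finset.univ _ fun i _ =>
      (memC2 hmeas hL8 hn i i).const_mul c).const_mul _
  have hintC : ∀ i j : Fin pn,
      Integrable (fun ω => ∑ k, ctr (X ω) i k * ctr (X ω) j k) P :=
    fun i j => (memC2 hmeas hL8 hn i j).integrable one_le_two
  have hintCC : ∀ i j i' j' : Fin pn, Integrable (fun ω =>
      (∑ k, ctr (X ω) i k * ctr (X ω) j k) * (∑ k, ctr (X ω) i' k * ctr (X ω) j' k)) P :=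
    fun i j i' j' => mul_int (memC2 hmeas hL8 hn i j) (memC2 hmeas hL8 hn i' j')
  have hEmE : ∫ ω, mE X ω ∂P = tr / pn := by
    simp only [hmE]
    rw [integral_const_mul, integral_finset_sum _ fun i _ => (hintC i i).const_mul c]
    have hs : ∀ i : Fin pn, ∫ ω, c * ∑ k, ctr (X ω) i k * ctr (X ω) i k ∂P
        = Sig i i := by
      intro i
      rw [integral_const_mul, ECij hmeas hL8 hmean hcov hindep hn i i, ← mul_assoc, hcn,
        one_mul]
    rw [Finset.sum_congr rfl fun i _ => hs i, ← htr]
    ring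
  have hEmE2 : ∫ ω, mE X ω * mE X ω ∂P = (c * c / ((pn:ℝ) * (pn:ℝ))) * ED := by
    have hmEsq : (fun ω => mE X ω * mE X ω) = fun ω => ∑ i : Fin pn, ∑ j : Fin pn,
        (c * c / ((pn:ℝ) * (pn:ℝ))) * ((∑ k, ctr (X ω) i k * ctr (X ω) i k)
          * (∑ k, ctr (X ω) j k * ctr (X ω) j k)) := by
      funext ω
      simp only [hmE]
      rw [show (1/(pn:ℝ) * ∑ i, c * ∑ k, ctr (X ω) i k * ctr (X ω) i k)
            * (1/(pn:ℝ) * ∑ i, c * ∑ k, ctr (X ω) i k * ctr (X ω) i k)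
          = ((∑ i, c * ∑ k, ctr (X ω) i k * ctr (X ω) i k)
            * (∑ j, c * ∑ k, ctr (X ω) j k * ctr (X ω) j k)) * (1/((pn:ℝ)*(pn:ℝ))) from by
        ring]
      rw [Finset.sum_mul_sum, Finset.sum_mul]
      refine Finset.sum_congr rfl fun i _ => ?_
      rw [Finset.sum_mul]
      exact Finset.sum_congr rfl fun j _ => by ring
    rw [hmEsq, integral_finset_sum _ fun i _ => integrable_finset_sum _ fun j _ =>
      (hintCC i i j j).const_mul _, hED, Finset.mul_sum]
    refine Finset.sum_congr rfl fun i _ => ?_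
    rw [integral_finset_sum _ fun j _ => (hintCC i i j j).const_mul _, Finset.mul_sum]
    exact Finset.sum_congr rfl fun j _ => integral_const_mul _ _
  have hvar : varP P (mE X) = (c * c / ((pn:ℝ) * (pn:ℝ))) * ED - (tr / pn) ^ 2 := by
    rw [varP_eq hmE2, hEmE2, hEmE]
  -- beta2
  have hbeta : beta2 P X Sig = (c * c * E3 - W) / pn := by
    have hfun : (fun ω => nrm (sampleCov (X ω) - Sig) ^ 2) = fun ω =>
        (∑ i : Fin pn, ∑ j : Fin pn,
          (c * (∑ k, ctr (X ω) i k * ctr (X ω) j k) - Sig i j)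
            * (c * (∑ k, ctr (X ω) i k * ctr (X ω) j k) - Sig i j)) / pn := by
      funext ω
      rw [nrm_sq]
      simp only [Matrix.sub_apply, hS]
    have hd2 : ∀ i j : Fin pn, MemLp
        (fun ω => c * (∑ k, ctr (X ω) i k * ctr (X ω) j k) - Sig i j) 2 P :=
      fun i j => ((memC2 hmeas hL8 hn i j).const_mul c).sub (memLp_const _)
    have hterm : ∀ i j : Fin pn,
        ∫ ω, (c * (∑ k, ctr (X ω) i k * ctr (X ω) j k) - Sig i j)
          * (c * (∑ k, ctr (X ω) i k * ctr (X ω) j k) - Sig i j) ∂P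
        = c * c * (∫ ω, (∑ k, ctr (X ω) i k * ctr (X ω) j k)
            * (∑ k, ctr (X ω) i k * ctr (X ω) j k) ∂P) - Sig i j * Sig i j := by
      intro i j
      rw [Esq_affine (memC2 hmeas hL8 hn i j) c (Sig i j),
        ECij hmeas hL8 hmean hcov hindep hn i j, hc]
      field_simp
      ring
    simp only [beta2]
    rw [hfun, integral_div, integral_finset_sum _ fun i _ =>
      integrable_finset_sum _ fun j _ => sq_int (hd2 i j)]
    have hswap : ∀ i : Fin pn, (∫ ω, ∑ j : Fin pn,
        (c * (∑ k, ctr (X ω) i k * ctr (X ω) j k) - Sig i j)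
          * (c * (∑ k, ctr (X ω) i k * ctr (X ω) j k) - Sig i j) ∂P)
        = ∑ j : Fin pn, ∫ ω,
        (c * (∑ k, ctr (X ω) i k * ctr (X ω) j k) - Sig i j)
          * (c * (∑ k, ctr (X ω) i k * ctr (X ω) j k) - Sig i j) ∂P :=
      fun i => integral_finset_sum _ fun j _ => sq_int (hd2 i j)
    rw [Finset.sum_congr rfl fun i _ => hswap i]
    rw [Finset.sum_congr rfl fun i _ => Finset.sum_congr rfl fun j _ => hterm i j]
    congr 1
    rw [show ∑ i : Fin pn, ∑ j : Fin pn,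
        (c * c * (∫ ω, (∑ k, ctr (X ω) i k * ctr (X ω) j k)
          * (∑ k, ctr (X ω) i k * ctr (X ω) j k) ∂P) - Sig i j * Sig i j)
        = (∑ i : Fin pn, ∑ j : Fin pn, c * c * (∫ ω, (∑ k, ctr (X ω) i k * ctr (X ω) j k)
          * (∑ k, ctr (X ω) i k * ctr (X ω) j k) ∂P))
          - ∑ i : Fin pn, ∑ j : Fin pn, Sig i j * Sig i j from by
      rw [← Finset.sum_sub_distrib]
      exact Finset.sum_congr rfl fun i _ => by rw [← Finset.sum_sub_distrib]]
    rw [← hW]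
    congr 1
    rw [hE3, Finset.mul_sum]
    exact Finset.sum_congr rfl fun i _ => by rw [Finset.mul_sum]
  -- delta2
  have hdelta : delta2 P X Sig
      = (c * c * E3 - 2 * muS Sig * tr + muS Sig * muS Sig * pn) / pn := by
    have hfun : (fun ω => nrm (sampleCov (X ω) - muS Sig • 1) ^ 2) = fun ω =>
        (∑ i : Fin pn, ∑ j : Fin pn,
          (c * (∑ k, ctr (X ω) i k * ctr (X ω) j k)
              - muS Sig * (1 : Matrix (Fin pn) (Fin pn) ℝ) i j)
            * (c * (∑ k, ctr (X ω) i k * ctr (X ω) j k)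
              - muS Sig * (1 : Matrix (Fin pn) (Fin pn) ℝ) i j)) / pn := by
      funext ω
      rw [nrm_sq]
      simp only [Matrix.sub_apply, Matrix.smul_apply, smul_eq_mul, hS]
    have hd2 : ∀ i j : Fin pn, MemLp
        (fun ω => c * (∑ k, ctr (X ω) i k * ctr (X ω) j k)
          - muS Sig * (1 : Matrix (Fin pn) (Fin pn) ℝ) i j) 2 P :=
      fun i j => ((memC2 hmeas hL8 hn i j).const_mul c).sub (memLp_const _)
    have hterm : ∀ i j : Fin pn,
        ∫ ω, (c * (∑ k, ctr (X ω) i k * ctr (X ω) j k)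
            - muS Sig * (1 : Matrix (Fin pn) (Fin pn) ℝ) i j)
          * (c * (∑ k, ctr (X ω) i k * ctr (X ω) j k)
            - muS Sig * (1 : Matrix (Fin pn) (Fin pn) ℝ) i j) ∂P
        = c * c * (∫ ω, (∑ k, ctr (X ω) i k * ctr (X ω) j k)
            * (∑ k, ctr (X ω) i k * ctr (X ω) j k) ∂P)
          - 2 * (muS Sig * (1 : Matrix (Fin pn) (Fin pn) ℝ) i j) * Sig i j
          + (muS Sig * (1 : Matrix (Fin pn) (Fin pn) ℝ) i j)
            * (muS Sig * (1 : Matrix (Fin pn) (Fin pn) ℝ) i j) := by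
      intro i j
      rw [Esq_affine (memC2 hmeas hL8 hn i j) c _,
        ECij hmeas hL8 hmean hcov hindep hn i j, hc]
      field_simp
    simp only [delta2]
    rw [hfun, integral_div, integral_finset_sum _ fun i _ =>
      integrable_finset_sum _ fun j _ => sq_int (hd2 i j)]
    have hswap : ∀ i : Fin pn, (∫ ω, ∑ j : Fin pn,
        (c * (∑ k, ctr (X ω) i k * ctr (X ω) j k)
            - muS Sig * (1 : Matrix (Fin pn) (Fin pn) ℝ) i j)
          * (c * (∑ k, ctr (X ω) i k * ctr (X ω) j k)
            - muS Sig * (1 : Matrix (Fin pn) (Fin pn) ℝ) i j) ∂P)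
        = ∑ j : Fin pn, ∫ ω,
        (c * (∑ k, ctr (X ω) i k * ctr (X ω) j k)
            - muS Sig * (1 : Matrix (Fin pn) (Fin pn) ℝ) i j)
          * (c * (∑ k, ctr (X ω) i k * ctr (X ω) j k)
            - muS Sig * (1 : Matrix (Fin pn) (Fin pn) ℝ) i j) ∂P :=
      fun i => integral_finset_sum _ fun j _ => sq_int (hd2 i j)
    rw [Finset.sum_congr rfl fun i _ => hswap i]
    rw [Finset.sum_congr rfl fun i _ => Finset.sum_congr rfl fun j _ => hterm i j]
    congr 1
    have hsplit : ∑ i : Fin pn, ∑ j : Fin pn,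
        (c * c * (∫ ω, (∑ k, ctr (X ω) i k * ctr (X ω) j k)
            * (∑ k, ctr (X ω) i k * ctr (X ω) j k) ∂P)
          - 2 * (muS Sig * (1 : Matrix (Fin pn) (Fin pn) ℝ) i j) * Sig i j
          + (muS Sig * (1 : Matrix (Fin pn) (Fin pn) ℝ) i j)
            * (muS Sig * (1 : Matrix (Fin pn) (Fin pn) ℝ) i j))
        = (∑ i : Fin pn, ∑ j : Fin pn, c * c * (∫ ω,
            (∑ k, ctr (X ω) i k * ctr (X ω) j k)
            * (∑ k, ctr (X ω) i k * ctr (X ω) j k) ∂P))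
          - (∑ i : Fin pn, ∑ j : Fin pn,
            2 * (muS Sig * (1 : Matrix (Fin pn) (Fin pn) ℝ) i j) * Sig i j)
          + ∑ i : Fin pn, ∑ j : Fin pn,
            (muS Sig * (1 : Matrix (Fin pn) (Fin pn) ℝ) i j)
            * (muS Sig * (1 : Matrix (Fin pn) (Fin pn) ℝ) i j) := by
      rw [← Finset.sum_sub_distrib, ← Finset.sum_add_distrib]
      refine Finset.sum_congr rfl fun i _ => ?_
      rw [← Finset.sum_sub_distrib, ← Finset.sum_add_distrib]
    rw [hsplit]
    have hmid : ∑ i : Fin pn, ∑ j : Fin pn,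
        2 * (muS Sig * (1 : Matrix (Fin pn) (Fin pn) ℝ) i j) * Sig i j
        = 2 * muS Sig * tr := by
      simp only [Matrix.one_apply, mul_ite, mul_one, mul_zero, ite_mul, zero_mul]
      simp [Finset.sum_ite_eq, htr, Finset.mul_sum]
    have hlast : ∑ i : Fin pn, ∑ j : Fin pn,
        (muS Sig * (1 : Matrix (Fin pn) (Fin pn) ℝ) i j)
        * (muS Sig * (1 : Matrix (Fin pn) (Fin pn) ℝ) i j)
        = muS Sig * muS Sig * pn := by
      simp only [Matrix.one_apply, mul_ite, mul_one, mul_zero, ite_mul, zero_mul]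
      simp [Finset.sum_ite_eq, Finset.card_univ]
      ring
    rw [hmid, hlast]
    congr 1
    congr 1
    rw [hE3, Finset.mul_sum]
    exact Finset.sum_congr rfl fun i _ => by rw [Finset.mul_sum]
  -- final algebra
  have hEDval : ED = E3 + ((n:ℝ) - 1) * ((n:ℝ) - 2) * (tr * tr - W) := by linarith [hK8]
  rw [hvar, hbeta, hdelta, hmu, hEDval]
  simp only [q0, q1, q2, hc]
  field_simp
  ring

end LW
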